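/- arXiv:2009.13590 — 4 statements merged into one kernel-verified Lean document; each statement's English description precedes it below -/
import Mathlib

section
/- Let S be a finite set and F a field. The map sending a partition 𝒦 of S to Map_𝒦(S,F) (the set of functions S → F that are constant on each block of 𝒦) is a bijection from the set of partitions of S onto the set of unital F-subalgebras of the algebra F^S of all functions S → F with pointwise operations. Its inverse sends a unital subalgebra A ⊆ F^S to the partition of S into the equivalence classes of the relation s ~ t iff f(s) = f(t) for all f ∈ A. Moreover, the bijection is order-reversing with respect to refinement and inclusion: 𝒦 ≼ 𝒧 if and only if Map_𝒦(S,F) ⊇ Map_𝒧(S,F). -/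
open scoped BigOperators

noncomputable section

/-- `χ` is an irreducible complex character of `G`. -/
def IsIrrChar (G : Type) [Group G] [Fintype G] (χ : G → ℂ) : Prop :=
  ∃ V : FDRep ℂ G, CategoryTheory.Simple V ∧ χ = FDRep.character V

/-- The type of irreducible complex characters of `G` (denoted `Irr G`). -/
abbrev IrrChar (G : Type) [Group G] [Fintype G] := {χ : G → ℂ // IsIrrChar G χ}

variable (G : Type) [Group G] [Fintype G]

/-- `σ_X = ∑_{χ ∈ X} χ(1)·χ`. -/
def sigmaChar (X : Set (IrrChar G)) : G → ℂ :=
  fun g => ∑ᶠ χ ∈ X, χ.1 1 * χ.1 g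

/-- A subset of `G` is `G`-invariant if it is closed under conjugation. -/
def GInv (K : Set G) : Prop := ∀ g x : G, x ∈ K → g * x * g⁻¹ ∈ K

/-- `Clpt 𝒳`: the partition of `G` into equivalence classes of
`g ~ h ↔ σ_X(g) = σ_X(h)` for all `X ∈ 𝒳`. -/
def Clpt (𝒳 : Set (Set (IrrChar G))) : Set (Set G) :=
  {C | ∃ g : G, C = {h : G | ∀ X ∈ 𝒳, sigmaChar G X h = sigmaChar G X g}}

/-- `χ(K̂) = ∑_{g ∈ K} χ(g)`. -/
def charSum (χ : G → ℂ) (K : Set G) : ℂ := ∑ᶠ g ∈ K, χ g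

/-- `Irpt 𝒦`: the partition of `Irr G` into equivalence classes of
`χ ~ ψ ↔ χ(K̂)/χ(1) = ψ(K̂)/ψ(1)` for all `K ∈ 𝒦`. -/
def Irpt (𝒦 : Set (Set G)) : Set (Set (IrrChar G)) :=
  {Y | ∃ χ : IrrChar G, Y = {ψ : IrrChar G |
      ∀ K ∈ 𝒦, charSum G ψ.1 K / ψ.1 1 = charSum G χ.1 K / χ.1 1}}

/-- `P` refines `Q` (`P ≼ Q`): every block of `P` is contained in a block of `Q`. -/
def Refines {α : Type} (P Q : Set (Set α)) : Prop :=
  ∀ A ∈ P, ∃ B ∈ Q, A ⊆ B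

/-- `(𝒳, 𝒦)` is a supercharacter theory of `G`. -/
def IsSCT (𝒳 : Set (Set (IrrChar G))) (𝒦 : Set (Set G)) : Prop :=
  Setoid.IsPartition 𝒳 ∧ Setoid.IsPartition 𝒦 ∧ (∀ K ∈ 𝒦, GInv G K) ∧
    𝒳.ncard = 𝒦.ncard ∧
    ∀ X ∈ 𝒳, ∀ K ∈ 𝒦, ∀ g ∈ K, ∀ h ∈ K, sigmaChar G X g = sigmaChar G X h

/-- `K̂ = ∑_{g ∈ K} g` in the group algebra. -/
def khat (K : Set G) : MonoidAlgebra ℂ G := ∑ᶠ g ∈ K, MonoidAlgebra.single g (1 : ℂ)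

/-- The central idempotent `e_χ = (χ(1)/|G|) ∑_g χ(g) g⁻¹`. -/
def centIdem (χ : G → ℂ) : MonoidAlgebra ℂ G :=
  (χ 1 / (Fintype.card G : ℂ)) • ∑ g : G, MonoidAlgebra.single g⁻¹ (χ g)

/-- `e_X = ∑_{χ ∈ X} e_χ`. -/
def eIdem (X : Set (IrrChar G)) : MonoidAlgebra ℂ G := ∑ᶠ χ ∈ X, centIdem G χ.1

/-- The linear extension of `χ : G → ℂ` to the group algebra. -/
def charExt (χ : G → ℂ) (z : MonoidAlgebra ℂ G) : ℂ := ∑ g : G, z.coeff g * χ g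

/-- The subalgebra of functions `S → F` constant on each block of `𝒦`. -/
def MapPart (F : Type) [Field F] {S : Type} (𝒦 : Set (Set S)) : Subalgebra F (S → F) where
  carrier := {f | ∀ K ∈ 𝒦, ∀ s ∈ K, ∀ t ∈ K, f s = f t}
  mul_mem' := fun {f g} hf hg K hK s hs t ht => by
    simp only [Pi.mul_apply, hf K hK s hs t ht, hg K hK s hs t ht]
  one_mem' := fun K hK s hs t ht => rfl
  add_mem' := fun {f g} hf hg K hK s hs t ht => by
    simp only [Pi.add_apply, hf K hK s hs t ht, hg K hK s hs t ht]
  zero_mem' := fun K hK s hs t ht => rfl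
  algebraMap_mem' := fun r K hK s hs t ht => rfl

/-- The partition of `S` determined by a subalgebra `A` of `S → F`:
`s ~ t ↔ f(s) = f(t)` for all `f ∈ A`. -/
def algPart (F : Type) [Field F] {S : Type} (A : Subalgebra F (S → F)) : Set (Set S) :=
  {C | ∃ s : S, C = {t : S | ∀ f ∈ A, f t = f s}}

/-! The subalgebra `A` is exactly the set of functions constant on the classes of the relation
"no `f ∈ A` separates `s` and `t`": given two separated points, an affine change of a separating
function gives one in `A` that is `0` at the first and `1` at the second, and a product of such
functions over the finitely many points is the indicator of a class; every function constant on
classes is a linear combination of these indicators. Conversely the indicators of the classes of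
any equivalence relation are constant on its classes, so the relation is recovered from
`Map_𝒦(S,F)`. Partitions being the same as equivalence relations, everything follows. -/

variable {S F : Type} [Field F]

def sepSetoid (A : Subalgebra F (S → F)) : Setoid S where
  r s t := ∀ f ∈ A, f s = f t
  iseqv := ⟨fun _ _ _ => rfl, fun h f hf => (h f hf).symm,
    fun h₁ h₂ f hf => (h₁ f hf).trans (h₂ f hf)⟩

theorem algPart_eq_classes (A : Subalgebra F (S → F)) : algPart F A = (sepSetoid A).classes :=
  rfl

theorem sepSetoid_anti {A B : Subalgebra F (S → F)} (h : A ≤ B) : sepSetoid B ≤ sepSetoid A :=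
  fun _ _ hst f hf => hst f (h hf)

theorem sepSetoid_le_ker {A : Subalgebra F (S → F)} {f : S → F} (hf : f ∈ A) :
    sepSetoid A ≤ Setoid.ker f :=
  fun _ _ hst => hst f hf

theorem mem_mapPart_classes {r : Setoid S} {f : S → F} :
    f ∈ MapPart F r.classes ↔ r ≤ Setoid.ker f := by
  refine ⟨fun hf s t hst => ?_, ?_⟩
  · exact hf _ (r.mem_classes t) s hst t (r.refl' t)
  · rintro hf _ ⟨y, rfl⟩ s hs t ht
    exact hf (r.trans' hs (r.symm' ht))

theorem exists_mem_eq_zero_eq_one {A : Subalgebra F (S → F)} {s t : S}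
    (h : ¬ sepSetoid A s t) : ∃ g ∈ A, g s = 0 ∧ g t = 1 := by
  obtain ⟨f, hf, hne⟩ : ∃ f ∈ A, f s ≠ f t := by
    by_contra! hall
    exact h hall
  refine ⟨(f t - f s)⁻¹ • (f - algebraMap F (S → F) (f s)),
    A.smul_mem (A.sub_mem hf (A.algebraMap_mem _)) _, by simp, ?_⟩
  simpa using inv_mul_cancel₀ (sub_ne_zero.mpr hne.symm)

theorem indicator_sepSetoid_mem [Fintype S] (A : Subalgebra F (S → F)) (t : S) :
    {s | sepSetoid A s t}.indicator 1 ∈ A := by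
  have hsep : ∀ s, ∃ g ∈ A, g t = 1 ∧ (¬ sepSetoid A s t → g s = 0) := by
    intro s
    by_cases h : sepSetoid A s t
    · exact ⟨1, A.one_mem, rfl, fun h' => absurd h h'⟩
    · obtain ⟨g, hg, hs, ht⟩ := exists_mem_eq_zero_eq_one h
      exact ⟨g, hg, ht, fun _ => hs⟩
  choose g hgA hgt hgs using hsep
  convert A.prod_mem (t := Finset.univ) fun s _ => hgA s
  ext u
  rw [Finset.prod_apply]
  by_cases hu : sepSetoid A u t
  · rw [Set.indicator_of_mem (s := {s | sepSetoid A s t}) hu]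
    exact (Finset.prod_eq_one fun s _ => (hu (g s) (hgA s)).trans (hgt s)).symm
  · rw [Set.indicator_of_notMem (s := {s | sepSetoid A s t}) hu]
    exact (Finset.prod_eq_zero (f := (g · u)) (Finset.mem_univ u) (hgs u hu)).symm

theorem mem_of_sepSetoid_le_ker [Fintype S] {A : Subalgebra F (S → F)} {f : S → F}
    (hf : sepSetoid A ≤ Setoid.ker f) : f ∈ A := by
  classical
  have hrepr : f = ∑ c : Quotient (sepSetoid A),
      f c.out • {s | sepSetoid A s c.out}.indicator 1 := by
    ext u
    simp only [Finset.sum_apply, Pi.smul_apply, smul_eq_mul, Set.indicator_apply,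
      Set.mem_ofPred_eq, Pi.one_apply, mul_ite, mul_one, mul_zero]
    simp_rw [← Quotient.mk_eq_iff_out]
    rw [Finset.sum_ite_eq, if_pos (Finset.mem_univ _)]
    exact (hf (Quotient.mk_out (s := sepSetoid A) u)).symm
  rw [hrepr]
  exact A.sum_mem fun c _ => A.smul_mem (indicator_sepSetoid_mem A c.out) _

theorem mapPart_classes_sepSetoid [Fintype S] (A : Subalgebra F (S → F)) :
    MapPart F (sepSetoid A).classes = A := by
  ext f
  rw [mem_mapPart_classes]
  exact ⟨mem_of_sepSetoid_le_ker, sepSetoid_le_ker⟩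

theorem sepSetoid_mapPart_classes (r : Setoid S) :
    sepSetoid (MapPart F r.classes) = r := by
  ext s t
  refine ⟨fun hst => ?_, fun hst f hf => mem_mapPart_classes.1 hf hst⟩
  have hind : r ≤ Setoid.ker ({u | r u t}.indicator (1 : S → F)) := fun a b hab => by
    have hiff : r a t ↔ r b t := ⟨r.trans' (r.symm' hab), r.trans' hab⟩
    classical
    simp only [Setoid.ker_def, Set.indicator_apply, Set.mem_ofPred_eq, hiff, Pi.one_apply]
  have h := hst _ (mem_mapPart_classes.2 hind)
  by_contra hs
  rw [Set.indicator_of_notMem (s := {u | r u t}) hs,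
    Set.indicator_of_mem (s := {u | r u t}) (r.refl' t)] at h
  exact zero_ne_one h

theorem mapPart_classes_le_iff {r r' : Setoid S} :
    MapPart F r'.classes ≤ MapPart F r.classes ↔ r ≤ r' := by
  refine ⟨fun h => ?_, fun h f hf => mem_mapPart_classes.2 (h.trans (mem_mapPart_classes.1 hf))⟩
  simpa only [sepSetoid_mapPart_classes] using sepSetoid_anti h

theorem refines_classes_iff {α : Type} {r r' : Setoid α} :
    Refines r.classes r'.classes ↔ r ≤ r' := by
  refine ⟨fun h s t hst => ?_, ?_⟩
  · obtain ⟨B, hB, hsub⟩ := h _ (r.mem_classes t)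
    exact r'.rel_iff_exists_classes.2 ⟨B, hB, hsub hst, hsub (r.refl' t)⟩
  · rintro h _ ⟨t, rfl⟩
    exact ⟨_, r'.mem_classes t, fun s hs => h hs⟩

theorem Setoid.IsPartition.exists_classes_eq {α : Type} {𝒦 : Set (Set α)}
    (h𝒦 : Setoid.IsPartition 𝒦) : ∃ r : Setoid α, r.classes = 𝒦 :=
  ⟨_, Setoid.classes_mkClasses 𝒦 h𝒦⟩

/-- The map `𝒦 ↦ Map_𝒦(S,F)` is a bijection from partitions of `S`
onto unital `F`-subalgebras of `S → F`, with inverse `A ↦ algPart F A`, and it is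
order-reversing for refinement and inclusion. -/
theorem stmt0 (S F : Type) [Fintype S] [Field F] :
    (∀ 𝒦 : Set (Set S), Setoid.IsPartition 𝒦 → algPart F (MapPart F 𝒦) = 𝒦) ∧
    (∀ A : Subalgebra F (S → F),
        Setoid.IsPartition (algPart F A) ∧ MapPart F (algPart F A) = A) ∧
    (∀ 𝒦 𝒧 : Set (Set S), Setoid.IsPartition 𝒦 → Setoid.IsPartition 𝒧 →
        (Refines 𝒦 𝒧 ↔ MapPart F 𝒧 ≤ MapPart F 𝒦)) := by
  refine ⟨fun 𝒦 h𝒦 => ?_, fun A => ?_, fun 𝒦 𝒧 h𝒦 h𝒧 => ?_⟩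
  · obtain ⟨r, rfl⟩ := h𝒦.exists_classes_eq
    rw [algPart_eq_classes, sepSetoid_mapPart_classes]
  · exact ⟨Setoid.isPartition_classes (sepSetoid A), mapPart_classes_sepSetoid A⟩
  · obtain ⟨r, rfl⟩ := h𝒦.exists_classes_eq
    obtain ⟨r', rfl⟩ := h𝒧.exists_classes_eq
    rw [refines_classes_iff, mapPart_classes_le_iff]

end
end

section
/- Let S be a finite set, F a field, and B ⊆ Map(S,F) a set of functions. Then the unital F-subalgebra of Map(S,F) generated by B equals Map_𝒦(S,F), where 𝒦 is the partition of S into the equivalence classes of the relation s ~ t iff b(s) = b(t) for all b ∈ B. -/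
open scoped BigOperators

noncomputable section

variable (G : Type) [Group G] [Fintype G]

/-!
A subalgebra `A` of `S → F`, with `S` finite, consists exactly of the functions constant on the
classes of points that `A` does not separate. Rescaling separating functions to take the values
`1` and `0`, the product of one such function per point outside a class is the indicator of that
class; a class-constant function is a linear combination of these indicators. The classes of
`Algebra.adjoin F B` are those of `B`, because point evaluations are algebra maps.
-/

namespace Subalgebra

variable {S F : Type*} [Field F] (A : Subalgebra F (S → F))

def evalSetoid : Setoid S :=
  Setoid.ker fun s (f : A) => (f : S → F) s

variable {A}

theorem evalSetoid_iff {s t : S} : A.evalSetoid s t ↔ ∀ f ∈ A, f s = f t := by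
  rw [evalSetoid, Setoid.ker_def, funext_iff, Subtype.forall]

theorem exists_eq_one_eq_zero {f : S → F} (hf : f ∈ A) {s t : S} (hst : f s ≠ f t) :
    ∃ g ∈ A, g s = 1 ∧ g t = 0 := by
  refine ⟨(f s - f t)⁻¹ • (f - algebraMap F (S → F) (f t)),
    A.smul_mem (A.sub_mem hf (A.algebraMap_mem _)) _, ?_, ?_⟩
  · simp [inv_mul_cancel₀ (sub_ne_zero.mpr hst)]
  · simp

theorem indicator_setOf_evalSetoid_mem [Finite S] (s : S) :
    {t | A.evalSetoid t s}.indicator 1 ∈ A := by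
  have : Fintype S := Fintype.ofFinite S
  have hsep : ∀ t, ∃ g ∈ A, g s = 1 ∧ (¬ A.evalSetoid t s → g t = 0) := by
    intro t
    by_cases hts : A.evalSetoid t s
    · exact ⟨1, A.one_mem, rfl, fun h => absurd hts h⟩
    · obtain ⟨f, hf, hft⟩ := not_forall₂.mp (mt evalSetoid_iff.mpr hts)
      obtain ⟨g, hg, hgs, hgt⟩ := exists_eq_one_eq_zero hf (Ne.symm hft)
      exact ⟨g, hg, hgs, fun _ => hgt⟩
  choose g hgA hgs hgt using hsep
  have hprod : ∏ t, g t ∈ A := A.prod_mem fun t _ => hgA t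
  convert hprod using 1
  ext u
  by_cases hus : A.evalSetoid u s
  · rw [Set.indicator_of_mem (show u ∈ {t | A.evalSetoid t s} from hus),
      evalSetoid_iff.mp hus _ hprod, Finset.prod_apply]
    simp [hgs]
  · rw [Set.indicator_of_notMem (show u ∉ {t | A.evalSetoid t s} from hus), Finset.prod_apply]
    exact (Finset.prod_eq_zero (f := fun t => g t u) (Finset.mem_univ u) (hgt u hus)).symm

theorem mem_iff_forall_evalSetoid [Finite S] {f : S → F} :
    f ∈ A ↔ ∀ s t, A.evalSetoid s t → f s = f t := by
  refine ⟨fun hf s t hst => evalSetoid_iff.mp hst f hf, fun hf => ?_⟩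
  classical
  have : Fintype (Quotient A.evalSetoid) := Fintype.ofFinite _
  have hsum : f = ∑ q, Quotient.lift f hf q • {t | ⟦t⟧ = q}.indicator 1 := by
    ext u
    simp [Finset.sum_apply, Set.indicator_apply]
  rw [hsum]
  refine A.sum_mem fun q _ => A.smul_mem ?_ _
  obtain ⟨s, rfl⟩ := Quotient.exists_rep q
  simpa only [Quotient.eq] using indicator_setOf_evalSetoid_mem s

theorem adjoin_evalSetoid_iff {B : Set (S → F)} {s t : S} :
    (Algebra.adjoin F B).evalSetoid s t ↔ ∀ b ∈ B, b s = b t := by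
  refine evalSetoid_iff.trans ⟨fun h b hb => h b (Algebra.subset_adjoin hb), fun h f hf => ?_⟩
  have : Algebra.adjoin F B ≤ AlgHom.equalizer (Pi.evalAlgHom F _ s) (Pi.evalAlgHom F _ t) :=
    Algebra.adjoin_le h
  exact this hf

end Subalgebra

theorem mem_mapPart_classes_iff {S F : Type} [Field F] (r : Setoid S) {f : S → F} :
    f ∈ MapPart F r.classes ↔ ∀ s t, r s t → f s = f t := by
  refine ⟨fun hf s t hst => hf _ ⟨t, rfl⟩ s hst t (r.refl t), ?_⟩
  rintro hf K ⟨u, rfl⟩ s hs t ht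
  exact (hf s u hs).trans (hf t u ht).symm

theorem mapPart_evalSetoid_classes {S F : Type} [Finite S] [Field F]
    (A : Subalgebra F (S → F)) : MapPart F A.evalSetoid.classes = A := by
  ext f
  rw [mem_mapPart_classes_iff, Subalgebra.mem_iff_forall_evalSetoid]

/-- The unital `F`-subalgebra of `Map(S,F)` generated by `B` equals
`Map_𝒦(S,F)` where `𝒦` is the partition of `S` by `s ~ t ↔ b(s) = b(t)` for all `b ∈ B`. -/
theorem stmt1 (S F : Type) [Fintype S] [Field F] (B : Set (S → F)) :
    Algebra.adjoin F B
      = MapPart F {C : Set S | ∃ s : S, C = {t : S | ∀ b ∈ B, b t = b s}} := by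
  have hclasses : {C : Set S | ∃ s : S, C = {t : S | ∀ b ∈ B, b t = b s}}
      = (Algebra.adjoin F B).evalSetoid.classes := by
    simp only [Setoid.classes, Subalgebra.adjoin_evalSetoid_iff]
  rw [hclasses, mapPart_evalSetoid_classes]

end
end

section
/- Let 𝒦 be a partition of G into G-invariant subsets. Then |𝒦| ≤ |Irpt(𝒦)| (the number of blocks of 𝒦 is at most the number of blocks of Irpt(𝒦)), and the singleton {1_G} consisting of the trivial character is a block of Irpt(𝒦). -/
open scoped BigOperators

/-!
The numbers `χ(K̂)/χ(1)`, `K ∈ 𝒦`, are functions on `Irr(G)` that are constant on the blocks of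
`Irpt 𝒦`, so `|𝒦| ≤ |Irpt 𝒦|` follows once they are linearly independent. A linear relation
among them gives a class function `z`, constant on the blocks of `𝒦`, that is orthogonal to every
irreducible character. The central element `∑ z(g) g` of `ℂ[G]` acts on each simple left ideal
`S` by a scalar (Schur) whose trace is `∑ z(g) χ_S(g) = 0`, hence by zero; as `ℂ[G]` is
semisimple it is zero, so `z = 0`.

If `ψ` lies in the block of the trivial character, summing `ψ(K̂) = ψ(1)|K|` over `K ∈ 𝒦` gives
`∑_g ψ(g) = ψ(1)|G| ≠ 0`, and orthogonality with the trivial character forces `ψ = 1`.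
-/

universe u

open CategoryTheory

theorem FDRep.simple_of_isIrreducible {k : Type u} [Field k] [IsAlgClosed k] [CharZero k]
    {G : Type u} [Group G] [Fintype G] {V : Type u} [AddCommGroup V] [Module k V]
    [FiniteDimensional k V] (ρ : Representation k G V) [ρ.IsIrreducible] :
    Simple (FDRep.of ρ) := by
  have : Invertible (Nat.card G : k) := invertibleOfNonzero (NeZero.ne _)
  have h := ρ.char_orthonormal ρ
  rw [if_pos ⟨Representation.Equiv.refl ρ⟩, inv_mul_eq_one₀ (NeZero.ne _)] at h
  exact (FDRep.simple_iff_char_is_norm_one _).2 h.symm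

theorem Representation.asAlgebraHom_eq_zero_of_trace_eq_zero {k G V : Type*} [Field k]
    [IsAlgClosed k] [CharZero k] [Monoid G] [AddCommGroup V] [Module k V] [FiniteDimensional k V]
    (ρ : Representation k G V) [ρ.IsIrreducible] {a : MonoidAlgebra k G}
    (ha : a ∈ Subalgebra.center k (MonoidAlgebra k G))
    (htr : LinearMap.trace k V (ρ.asAlgebraHom a) = 0) : ρ.asAlgebraHom a = 0 := by
  let T : ρ.IntertwiningMap ρ := (ρ.asAlgebraHom a).intertwiningMap_of_isIntertwiningMap ρ ρ
    fun g v => by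
      rw [← Module.End.mul_apply, ← Module.End.mul_apply, ← ρ.asAlgebraHom_of, ← map_mul,
        ← map_mul, Subalgebra.mem_center_iff.1 ha]
  obtain ⟨c, hc⟩ := (IsIrreducible.algebraMap_intertwiningMap_bijective_of_isAlgClosed (ρ := ρ)).2 T
  have hT : ρ.asAlgebraHom a = c • LinearMap.id := (congrArg IntertwiningMap.toLinearMap hc).symm
  have : Nontrivial V := IsSimpleModule.nontrivial (MonoidAlgebra k G) ρ.asModule
  rw [hT, map_smul, LinearMap.trace_id, smul_eq_mul, mul_eq_zero] at htr
  rw [hT, htr.resolve_right (Nat.cast_ne_zero.2 Module.finrank_pos.ne'), zero_smul]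

/-! `ofModule'` rather than Mathlib's `ofModule`: the latter lives on a `RestrictScalars` synonym,
on which `FDRep.of` cannot find the `k`-module instance. -/

namespace Representation

variable {k G M : Type*} [Field k] [Monoid G] [AddCommGroup M] [Module k M]
  [Module (MonoidAlgebra k G) M] [IsScalarTower k (MonoidAlgebra k G) M]

theorem asAlgebraHom_ofModule' :
    (ofModule' (k := k) (G := G) M).asAlgebraHom = Algebra.lsmul k k M :=
  (MonoidAlgebra.lift k (M →ₗ[k] M) G).apply_symm_apply _

theorem ofModule'_apply (g : G) (m : M) :
    ofModule' (k := k) M g m = MonoidAlgebra.single g (1 : k) • m := by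
  rw [← asAlgebraHom_single_one, asAlgebraHom_ofModule']
  rfl

noncomputable def subrepresentationOfModule'OrderIso :
    Subrepresentation (ofModule' (k := k) (G := G) M) ≃o Submodule (MonoidAlgebra k G) M where
  toFun σ :=
    { σ.toSubmodule with
      smul_mem' c m hm := by
        have : (ofModule' (k := k) M).asAlgebraHom c m ∈ σ.toSubmodule := by
          induction c using MonoidAlgebra.induction_linear with
          | zero => simp
          | add x y hx hy => rw [map_add, LinearMap.add_apply]; exact add_mem hx hy
          | single g a =>
            rw [asAlgebraHom_single]
            exact σ.toSubmodule.smul_mem a (σ.apply_mem_toSubmodule g hm)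
        rwa [asAlgebraHom_ofModule'] at this }
  invFun N := ⟨N.restrictScalars k, fun g m hm => by
    rw [ofModule'_apply]; exact N.smul_mem _ hm⟩
  left_inv σ := rfl
  right_inv N := rfl
  map_rel_iff' := Iff.rfl

theorem isIrreducible_ofModule' [IsSimpleModule (MonoidAlgebra k G) M] :
    (ofModule' (k := k) (G := G) M).IsIrreducible :=
  (OrderIso.isSimpleOrder_iff subrepresentationOfModule'OrderIso).2
    ((isSimpleModule_iff _ _).1 ‹_›)

end Representation

def classFunctions (k G : Type*) [CommSemiring k] [Group G] : Submodule k (G → k) where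
  carrier := {f | ∀ g h : G, f (h * g * h⁻¹) = f g}
  add_mem' hf hf' g h := by simp only [Pi.add_apply, hf g h, hf' g h]
  zero_mem' _ _ := rfl
  smul_mem' c f hf g h := by simp only [Pi.smul_apply, hf g h]

theorem MonoidAlgebra.sum_single_mem_center {k G : Type*} [CommSemiring k] [Group G] [Fintype G]
    {f : G → k} (hf : f ∈ classFunctions k G) :
    ∑ g, MonoidAlgebra.single g (f g) ∈ Subalgebra.center k (MonoidAlgebra k G) := by
  rw [Subalgebra.mem_center_iff]
  intro b
  induction b using MonoidAlgebra.induction_on with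
  | of h =>
    simp only [MonoidAlgebra.of_apply, Finset.mul_sum, Finset.sum_mul,
      MonoidAlgebra.single_mul_single, one_mul, mul_one]
    refine Fintype.sum_equiv (MulAut.conj h).toEquiv _ _ fun g => ?_
    simp [MulAut.conj_apply, ← hf g h]
  | add x y hx hy => rw [add_mul, mul_add, hx, hy]
  | smul r x hx => rw [smul_mul_assoc, mul_smul_comm, hx]

section IrrChar

variable {G : Type} [Group G] [Fintype G]

theorem isIrrChar_one : IsIrrChar G 1 := by
  let V := FDRep.of (Representation.trivial ℂ G ℂ)
  have hV : V.character = 1 := by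
    funext g
    simp [V, FDRep.character]
  refine ⟨V, (FDRep.simple_iff_char_is_norm_one V).2 ?_, hV.symm⟩
  simp [hV]

theorem IrrChar.sum_mul_inv (χ ψ : IrrChar G) :
    ∑ g, χ.1 g * ψ.1 g⁻¹ = if χ = ψ then (Nat.card G : ℂ) else 0 := by
  obtain ⟨χ, V, hV, rfl⟩ := χ
  obtain ⟨ψ, W, hW, rfl⟩ := ψ
  split_ifs with h
  · have h : V.character = W.character := congrArg Subtype.val h
    simpa only [← h] using (FDRep.simple_iff_char_is_norm_one V).1 hV
  · have : Invertible (Nat.card G : ℂ) := invertibleOfNonzero (NeZero.ne _)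
    have hVW := FDRep.char_orthonormal V W
    rw [if_neg fun ⟨i⟩ => h (Subtype.ext (FDRep.char_iso i))] at hVW
    simpa using hVW

theorem IrrChar.apply_one_ne_zero (χ : IrrChar G) : χ.1 1 ≠ 0 := by
  intro h0
  have hsum := IrrChar.sum_mul_inv χ χ
  obtain ⟨χ, V, hV, rfl⟩ := χ
  change V.character 1 = 0 at h0
  rw [FDRep.char_one, Nat.cast_eq_zero, Module.finrank_zero_iff] at h0
  have hzero : ∀ g, V.character g = 0 := fun g => by
    simp [FDRep.character, Subsingleton.elim (V.ρ g) 0]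
  simp [hzero, eq_comm] at hsum

theorem IrrChar.linearIndependent : LinearIndependent ℂ fun χ : IrrChar G => χ.1 := by
  rw [linearIndependent_iff']
  intro s c hc ψ hψ
  have hpair : ∑ g, (∑ χ ∈ s, c χ • χ.1) g * ψ.1 g⁻¹ = c ψ * Nat.card G := by
    simp_rw [Finset.sum_apply, Pi.smul_apply, smul_eq_mul, Finset.sum_mul]
    rw [Finset.sum_comm]
    simp_rw [mul_assoc, ← Finset.mul_sum, IrrChar.sum_mul_inv, mul_ite, mul_zero]
    rw [Finset.sum_ite_eq' s ψ, if_pos hψ]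
  rw [hc] at hpair
  simpa using hpair.symm

instance IrrChar.finite : Finite (IrrChar G) := IrrChar.linearIndependent.finite

theorem eq_zero_of_forall_sum_mul_irrChar_eq_zero {f : G → ℂ} (hf : f ∈ classFunctions ℂ G)
    (horth : ∀ χ : IrrChar G, ∑ g, f g * χ.1 g = 0) : f = 0 := by
  set a := ∑ g, MonoidAlgebra.single g (f g)
  have ha := MonoidAlgebra.sum_single_mem_center hf
  have hsimple : ∀ S : Submodule (MonoidAlgebra ℂ G) (MonoidAlgebra ℂ G),
      IsSimpleModule (MonoidAlgebra ℂ G) S → ∀ x ∈ S, a * x = 0 := by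
    intro S hS x hx
    have : FiniteDimensional ℂ S :=
      Module.Finite.of_injective (S.subtype.restrictScalars ℂ) Subtype.val_injective
    let ρ := Representation.ofModule' (k := ℂ) (G := G) S
    have : ρ.IsIrreducible := Representation.isIrreducible_ofModule'
    have hρ := ρ.asAlgebraHom_eq_zero_of_trace_eq_zero ha (by
      simp only [map_sum, Representation.asAlgebraHom_single, map_smul, smul_eq_mul]
      exact horth ⟨_, FDRep.of ρ, FDRep.simple_of_isIrreducible ρ, rfl⟩)
    rw [Representation.asAlgebraHom_ofModule'] at hρ
    exact congrArg Subtype.val (LinearMap.congr_fun hρ ⟨x, hx⟩)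
  have h1 : a * 1 = 0 := by
    have h : (1 : MonoidAlgebra ℂ G) ∈
        sSup {S : Submodule (MonoidAlgebra ℂ G) _ | IsSimpleModule (MonoidAlgebra ℂ G) S} := by
      rw [IsSemisimpleModule.sSup_simples_eq_top]
      trivial
    rw [sSup_eq_iSup'] at h
    refine Submodule.iSup_induction _ (motive := fun x => a * x = 0) h
      (fun S x hx => hsimple S S.2 x hx) (mul_zero a) fun x y hx hy => ?_
    rw [mul_add, hx, hy, add_zero]
  classical
  funext g
  simpa [a, Finsupp.single_apply] using congrArg (·.coeff g) h1

end IrrChar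

theorem MapPart.natCard_le_ncard {F S ι : Type} [Field F] {P : Set (Set S)} (hP : P.Finite)
    (hcover : ∀ s, ∃ B ∈ P, s ∈ B) {v : ι → S → F} (hv : LinearIndependent F v)
    (hmem : ∀ i, v i ∈ MapPart F P) : Nat.card ι ≤ P.ncard := by
  classical
  have : Finite P := hP
  let L : (S → F) →ₗ[F] (P → F) :=
    LinearMap.pi fun B => if h : B.1.Nonempty then LinearMap.proj h.some else 0
  have hL : LinearIndependent F (L ∘ v) := by
    refine hv.map (Submodule.disjoint_def.2 fun f hf hLf => funext fun s => ?_)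
    have hf : f ∈ Subalgebra.toSubmodule (MapPart F P) :=
      Submodule.span_le.2 (Set.range_subset_iff.2 hmem) hf
    obtain ⟨B, hB, hsB⟩ := hcover s
    have hB0 := congr_fun (LinearMap.mem_ker.1 hLf) ⟨B, hB⟩
    have hne : B.Nonempty := ⟨s, hsB⟩
    simp only [L, LinearMap.pi_apply, dif_pos hne, LinearMap.proj_apply] at hB0
    rw [hf B hB s hsB _ hne.some_mem, hB0]
    rfl
  have := hL.finite
  cases nonempty_fintype ι
  cases nonempty_fintype P
  rw [Nat.card_eq_fintype_card, ← Nat.card_coe_set_eq, Nat.card_eq_fintype_card]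
  simpa using hL.fintype_card_le_finrank

theorem Setoid.IsPartition.linearIndependent_indicator {α R : Type*} [Ring R] {c : Set (Set α)}
    (hc : Setoid.IsPartition c) :
    LinearIndependent R fun B : c => (B : Set α).indicator (1 : α → R) := by
  classical
  rw [linearIndependent_iff']
  intro s a ha B hB
  obtain ⟨x, hx⟩ := Set.nonempty_iff_ne_empty.2 fun h => hc.1 (h ▸ B.2)
  have hunique : ∀ B' : c, x ∈ (B' : Set α) → B' = B := fun B' hx' =>
    Subtype.ext ((hc.2 x).unique ⟨B'.2, hx'⟩ ⟨B.2, hx⟩)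
  have hsum := congr_fun ha x
  rw [Finset.sum_apply, Finset.sum_eq_single_of_mem B hB fun B' _ hne => by
    simp [Set.indicator_of_notMem fun hx' => hne (hunique B' hx')]] at hsum
  simpa [Set.indicator_of_mem hx] using hsum

section charSum

variable {G : Type} [Fintype G]

theorem charSum_eq_sum_indicator_mul (f : G → ℂ) (K : Set G) :
    charSum G f K = ∑ g, K.indicator 1 g * f g := by
  classical
  rw [charSum, finsum_mem_def, finsum_eq_sum_of_fintype]
  simp [Set.indicator_apply]

theorem Setoid.IsPartition.finsum_mem_charSum {𝒦 : Set (Set G)} (h𝒦 : Setoid.IsPartition 𝒦)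
    (f : G → ℂ) : ∑ᶠ K ∈ 𝒦, charSum G f K = ∑ g, f g := by
  rw [← finsum_eq_sum_of_fintype, ← finsum_mem_univ f, ← h𝒦.sUnion_eq_univ,
    finsum_mem_sUnion h𝒦.pairwiseDisjoint (Set.toFinite _) fun K _ => Set.toFinite K]
  rfl

end charSum

section GInv

variable {G : Type} [Group G]

theorem GInv.conj_mem_iff {K : Set G} (hK : GInv G K) (g h : G) : h * g * h⁻¹ ∈ K ↔ g ∈ K :=
  ⟨fun hg => by simpa [mul_assoc] using hK h⁻¹ _ hg, hK h g⟩

theorem GInv.indicator_mem_classFunctions {K : Set G} (hK : GInv G K) :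
    K.indicator 1 ∈ classFunctions ℂ G := fun g h => by
  classical
  simp only [Set.indicator_apply, hK.conj_mem_iff, Pi.one_apply]

end GInv

section Irpt

variable {G : Type} [Group G] [Fintype G]

theorem linearIndependent_charSum_div {𝒦 : Set (Set G)} (h𝒦 : Setoid.IsPartition 𝒦)
    (hinv : ∀ K ∈ 𝒦, GInv G K) :
    LinearIndependent ℂ fun (K : 𝒦) (χ : IrrChar G) => charSum G χ.1 K / χ.1 1 := by
  let A : (G → ℂ) →ₗ[ℂ] (IrrChar G → ℂ) :=
    { toFun f χ := (∑ g, f g * χ.1 g) / χ.1 1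
      map_add' f f' := by
        funext χ
        simp [add_mul, Finset.sum_add_distrib, add_div]
      map_smul' c f := by
        funext χ
        simp [mul_assoc, ← Finset.mul_sum, mul_div_assoc] }
  have hA : (fun (K : 𝒦) (χ : IrrChar G) => charSum G χ.1 K / χ.1 1) =
      A ∘ fun K : 𝒦 => (K : Set G).indicator 1 := by
    funext K χ
    simp [A, charSum_eq_sum_indicator_mul]
  rw [hA]
  refine (h𝒦.linearIndependent_indicator (R := ℂ)).map (f := A)
    (Submodule.disjoint_def.2 fun f hf hAf => ?_)
  have hclass : f ∈ classFunctions ℂ G := Submodule.span_le.2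
    (Set.range_subset_iff.2 fun K : 𝒦 => (hinv K K.2).indicator_mem_classFunctions) hf
  refine eq_zero_of_forall_sum_mul_irrChar_eq_zero hclass fun χ => ?_
  exact (div_eq_zero_iff.1 (congr_fun (LinearMap.mem_ker.1 hAf) χ)).resolve_right
    χ.apply_one_ne_zero

theorem singleton_one_mem_Irpt {𝒦 : Set (Set G)} (h𝒦 : Setoid.IsPartition 𝒦) :
    {⟨1, isIrrChar_one⟩} ∈ Irpt G 𝒦 := by
  refine ⟨⟨1, isIrrChar_one⟩, Set.ext fun ψ => ⟨fun h K _ => h ▸ rfl, fun hψ => ?_⟩⟩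
  have hsum : ∑ g, ψ.1 g = ψ.1 1 * Nat.card G := by
    calc ∑ g, ψ.1 g = ∑ᶠ K ∈ 𝒦, charSum G ψ.1 K := (h𝒦.finsum_mem_charSum _).symm
      _ = ∑ᶠ K ∈ 𝒦, ψ.1 1 * charSum G 1 K := finsum_mem_congr rfl fun K hK => by
        have h : charSum G ψ.1 K / ψ.1 1 = charSum G 1 K / 1 := hψ K hK
        rwa [div_one, div_eq_iff ψ.apply_one_ne_zero, mul_comm] at h
      _ = ψ.1 1 * Nat.card G := by
        rw [← mul_finsum_mem, h𝒦.finsum_mem_charSum]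
        simp
  have horth := IrrChar.sum_mul_inv ψ ⟨1, isIrrChar_one⟩
  simp only [Pi.one_apply, mul_one, hsum] at horth
  rw [Set.mem_singleton_iff]
  by_contra hne
  rw [if_neg hne, mul_eq_zero] at horth
  exact horth.elim ψ.apply_one_ne_zero (NeZero.ne _)

end Irpt

/-- If `𝒦` is a `G`-invariant partition of `G`, then `|𝒦| ≤ |Irpt 𝒦|` and
the singleton of the trivial character is a block of `Irpt 𝒦`. -/
theorem stmt7 (G : Type) [Group G] [Fintype G] (𝒦 : Set (Set G))
    (hpart : Setoid.IsPartition 𝒦) (hinv : ∀ K ∈ 𝒦, GInv G K) :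
    𝒦.ncard ≤ (Irpt G 𝒦).ncard ∧
    ∃ triv : IrrChar G, (∀ g : G, triv.1 g = 1) ∧
      ({triv} : Set (IrrChar G)) ∈ Irpt G 𝒦 := by
  refine ⟨?_, ⟨1, isIrrChar_one⟩, fun _ => rfl, singleton_one_mem_Irpt hpart⟩
  rw [← Nat.card_coe_set_eq]
  refine MapPart.natCard_le_ncard (Set.toFinite _) (fun χ => ⟨_, ⟨χ, rfl⟩, fun _ _ => rfl⟩)
    (linearIndependent_charSum_div hpart hinv) fun K Y ⟨χ, hY⟩ ψ hψ ψ' hψ' => ?_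
  rw [hY] at hψ hψ'
  exact (hψ K K.2).trans (hψ' K K.2).symm
end

section
/- Let (𝒳,𝒦) be a supercharacter theory of G. For each X ∈ 𝒳 set d_X := gcd{χ(1) : χ ∈ X} and τ_X := (1/d_X)·σ_X. Then every character γ of G (i.e. the character of some finite-dimensional complex representation of G) that is constant on each member of 𝒦 is a linear combination γ = Σ_{X ∈ 𝒳} a_X τ_X with nonnegative integer coefficients a_X. In particular, each product τ_X τ_Y (X, Y ∈ 𝒳) is a nonnegative integer linear combination of the τ_Z, Z ∈ 𝒳. -/
/-!
The functions constant on the blocks of `𝒦` form a space of dimension `|𝒦| = |𝒳|` containing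
the `σ_X`, which are linearly independent by the orthogonality of irreducible characters; hence
`γ = ∑ c_X σ_X`. Pairing with `χ ∈ X` gives `c_X χ(1) = ⟨γ, χ⟩ ∈ ℕ`, and since `d_X` is the gcd
of the degrees in `X`, `c_X d_X ∈ ℕ`. For the second claim, `τ_X = ∑_{χ ∈ X} (χ(1)/d_X) χ` is a
character, so `τ_X τ_Y` is a character constant on the blocks of `𝒦`.
-/

open scoped BigOperators

noncomputable section

variable (G : Type) [Group G] [Fintype G]

/-- `γ` is the character of some finite-dimensional complex representation of `G`. -/
def IsChar (G : Type) [Group G] [Fintype G] (γ : G → ℂ) : Prop :=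
  ∃ V : FDRep ℂ G, γ = FDRep.character V


section Arithmetic

variable {R : Type*}

theorem dvd_of_mul_eq_natCast_of_coprime [CommSemiring R] [CharZero R] {c : R} {p q n m : ℕ}
    (hpq : p.Coprime q) (hq : c * q = p) (hn : c * n = m) : q ∣ n := by
  have h : q * m = p * n := by
    apply Nat.cast_injective (R := R)
    push_cast
    rw [← hq, ← hn]
    ring
  exact hpq.symm.dvd_of_dvd_mul_left (h ▸ dvd_mul_right q m)

theorem exists_mul_eq_natCast_of_dvd [Field R] [CharZero R] {ι : Type*} {s : Set ι}
    {n : ι → ℕ} {c : R} {i₀ : ι} (hi₀ : i₀ ∈ s) (hn₀ : n i₀ ≠ 0)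
    (hc : ∀ i ∈ s, ∃ m : ℕ, c * n i = m) {D : ℕ} (hD : ∀ k : ℕ, (∀ i ∈ s, k ∣ n i) → k ∣ D) :
    ∃ a : ℕ, c * D = a := by
  obtain ⟨m₀, hm₀⟩ := hc i₀ hi₀
  -- `c = num / den` in lowest terms, and `den` divides every `n i`, hence `D`
  set r : ℚ≥0 := m₀ / n i₀
  have hcr : c = r := by
    rw [NNRat.cast_div, NNRat.cast_natCast, NNRat.cast_natCast, eq_div_iff (by exact_mod_cast hn₀),
      hm₀]
  have hr : c * r.den = r.num := by rw [hcr]; exact_mod_cast r.mul_den_eq_num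
  have hden : r.den ∣ D := hD _ fun i hi =>
    let ⟨_, hm⟩ := hc i hi
    dvd_of_mul_eq_natCast_of_coprime r.coprime_num_den hr hm
  obtain ⟨k, rfl⟩ := hden
  exact ⟨r.num * k, by push_cast; rw [← mul_assoc, hr]⟩

end Arithmetic

open CategoryTheory MonoidalCategory

variable {G}

namespace IrrChar

def rep (χ : IrrChar G) : FDRep ℂ G := χ.2.choose

instance (χ : IrrChar G) : Simple χ.rep := χ.2.choose_spec.1

theorem character_rep (χ : IrrChar G) : χ.rep.character = χ.1 := χ.2.choose_spec.2.symm

end IrrChar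

instance : Invertible (Nat.card G : ℂ) := invertibleOfNonzero (Nat.cast_ne_zero.2 Nat.card_pos.ne')

def charPairing (ψ : G → ℂ) : (G → ℂ) →ₗ[ℂ] ℂ where
  toFun f := (Nat.card G : ℂ)⁻¹ * ∑ g, f g * ψ g⁻¹
  map_add' f₁ f₂ := by simp only [Pi.add_apply, add_mul, Finset.sum_add_distrib, mul_add]
  map_smul' c f := by
    simp only [Pi.smul_apply, smul_eq_mul, RingHom.id_apply, mul_assoc, ← Finset.mul_sum]
    ring

theorem charPairing_apply (ψ f : G → ℂ) :
    charPairing ψ f = (Nat.card G : ℂ)⁻¹ * ∑ g, f g * ψ g⁻¹ := rfl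

theorem charPairing_irrChar (χ ψ : IrrChar G) :
    charPairing ψ.1 χ.1 = if χ = ψ then 1 else 0 := by
  rw [charPairing_apply, ← χ.character_rep, ← ψ.character_rep, FDRep.char_orthonormal]
  congr 1
  refine propext ⟨fun ⟨i⟩ => Subtype.ext ?_, fun h => h ▸ ⟨Iso.refl _⟩⟩
  rw [← χ.character_rep, ← ψ.character_rep, FDRep.char_iso i]

theorem IsChar.exists_charPairing_eq_natCast {γ : G → ℂ} (hγ : IsChar G γ) (χ : IrrChar G) :
    ∃ m : ℕ, charPairing χ.1 γ = m := by
  obtain ⟨V, rfl⟩ := hγ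
  exact ⟨_, by rw [charPairing_apply, ← χ.character_rep,
    FDRep.scalar_product_char_eq_finrank_equivariant]⟩

namespace IrrChar

theorem linearIndependent_s15 : LinearIndependent ℂ (fun χ : IrrChar G => χ.1) := by
  refine linearIndependent_iff'.2 fun s c hsum χ hχ => ?_
  have h := congrArg (charPairing χ.1) hsum
  simp only [map_sum, map_smul, charPairing_irrChar, smul_eq_mul, mul_ite, mul_one, mul_zero,
    Finset.sum_ite_eq', if_pos hχ, map_zero] at h
  exact h

instance : Finite (IrrChar G) := linearIndependent_s15.finite

instance : Fintype (IrrChar G) := Fintype.ofFinite _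

theorem apply_one_ne_zero_s15 (χ : IrrChar G) : χ.1 1 ≠ 0 := by
  intro h
  have hrank : Module.finrank ℂ χ.rep = 0 := by
    rw [← χ.character_rep, FDRep.char_one] at h
    exact_mod_cast h
  have : Subsingleton χ.rep := Module.finrank_zero_iff.1 hrank
  have hzero : χ.1 = 0 := by
    ext g
    rw [← χ.character_rep, FDRep.character, Subsingleton.elim (χ.rep.ρ g) 0, map_zero]
    rfl
  have h1 := charPairing_irrChar χ χ
  rw [if_pos rfl, hzero, map_zero] at h1
  exact zero_ne_one h1

end IrrChar

theorem FDRep.character_of_trivial {M : Type} [Monoid M] (V : Type) [AddCommGroup V] [Module ℂ V]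
    [FiniteDimensional ℂ V] :
    (FDRep.of (Representation.trivial ℂ M V)).character = fun _ => (Module.finrank ℂ V : ℂ) := by
  ext g
  exact LinearMap.trace_one ℂ V

theorem FDRep.character_of_prod {M : Type} [Monoid M] (V W : FDRep ℂ M) :
    (FDRep.of (Representation.prod V.ρ W.ρ)).character = V.character + W.character := by
  ext g
  exact LinearMap.trace_prodMap' _ _

variable (G) in
def charSemiring : Subsemiring (G → ℂ) where
  carrier := {γ | IsChar G γ}
  zero_mem' := ⟨FDRep.of (Representation.trivial ℂ G PUnit), by
    rw [FDRep.character_of_trivial, Module.finrank_zero_of_subsingleton, Nat.cast_zero]; rfl⟩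
  one_mem' := ⟨FDRep.of (Representation.trivial ℂ G ℂ), by
    rw [FDRep.character_of_trivial, Module.finrank_self, Nat.cast_one]; rfl⟩
  add_mem' := by
    rintro _ _ ⟨V, rfl⟩ ⟨W, rfl⟩
    exact ⟨FDRep.of (Representation.prod V.ρ W.ρ), (FDRep.character_of_prod V W).symm⟩
  mul_mem' := by
    rintro _ _ ⟨V, rfl⟩ ⟨W, rfl⟩
    exact ⟨V ⊗ W, (FDRep.char_tensor V W).symm⟩

theorem IrrChar.mem_charSemiring (χ : IrrChar G) : χ.1 ∈ charSemiring G :=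
  ⟨χ.rep, χ.character_rep.symm⟩

theorem sigmaChar_eq_sum (X : Set (IrrChar G)) :
    sigmaChar G X = ∑ χ ∈ (Set.toFinite X).toFinset, χ.1 1 • χ.1 := by
  ext g
  rw [sigmaChar, finsum_mem_eq_finite_toFinset_sum, Finset.sum_apply]
  rfl

open scoped Classical in
theorem charPairing_sigmaChar (X : Set (IrrChar G)) (ψ : IrrChar G) :
    charPairing ψ.1 (sigmaChar G X) = if ψ ∈ X then ψ.1 1 else 0 := by
  simp only [sigmaChar_eq_sum, map_sum, map_smul, charPairing_irrChar, smul_eq_mul, mul_ite,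
    mul_one, mul_zero, Finset.sum_ite_eq', Set.Finite.mem_toFinset]

theorem charPairing_sum_smul_sigmaChar {𝒳 : Set (Set (IrrChar G))} (h𝒳 : Setoid.IsPartition 𝒳)
    (s : Finset 𝒳) (c : 𝒳 → ℂ) {X : 𝒳} (hX : X ∈ s) {χ : IrrChar G} (hχ : χ ∈ X.1) :
    charPairing χ.1 (∑ Y ∈ s, c Y • sigmaChar G Y) = c X * χ.1 1 := by
  rw [map_sum, Finset.sum_eq_single X _ (fun h => absurd hX h), map_smul, charPairing_sigmaChar,
    if_pos hχ, smul_eq_mul]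
  intro Y _ hYX
  have hχY : χ ∉ Y.1 := fun hχY =>
    hYX (Subtype.ext ((h𝒳.2 χ).unique ⟨Y.2, hχY⟩ ⟨X.2, hχ⟩))
  rw [map_smul, charPairing_sigmaChar, if_neg hχY, smul_zero]

theorem linearIndependent_sigmaChar {𝒳 : Set (Set (IrrChar G))} (h𝒳 : Setoid.IsPartition 𝒳) :
    LinearIndependent ℂ (fun X : 𝒳 => sigmaChar G X) := by
  refine linearIndependent_iff'.2 fun s c hsum X hX => ?_
  obtain ⟨χ, hχ⟩ := Setoid.nonempty_of_mem_partition h𝒳 X.2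
  have h := charPairing_sum_smul_sigmaChar h𝒳 s c hX hχ
  rw [hsum, map_zero, eq_comm, mul_eq_zero] at h
  exact h.resolve_right χ.apply_one_ne_zero_s15

theorem inv_mul_sigmaChar_mem_charSemiring {deg : IrrChar G → ℕ}
    (hdeg : ∀ χ : IrrChar G, χ.1 1 = deg χ) {X : Set (IrrChar G)} {d : ℕ}
    (hd : ∀ χ ∈ X, d ∣ deg χ) :
    (fun g => (d : ℂ)⁻¹ * sigmaChar G X g) ∈ charSemiring G := by
  have h : (fun g => (d : ℂ)⁻¹ * sigmaChar G X g)
      = ∑ χ ∈ (Set.toFinite X).toFinset, (deg χ / d) • χ.1 := by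
    ext g
    simp only [sigmaChar_eq_sum, Finset.sum_apply, Pi.smul_apply, smul_eq_mul, Finset.mul_sum]
    refine Finset.sum_congr rfl fun χ hχ => ?_
    rw [nsmul_eq_mul, Nat.cast_div_charZero (hd χ ((Set.toFinite X).mem_toFinset.1 hχ)), hdeg]
    ring
  rw [h]
  exact sum_mem fun χ _ => nsmul_mem χ.mem_charSemiring _

theorem finrank_mapPart_le {F S : Type} [Field F] [Finite S] {P : Set (Set S)}
    (hP : Setoid.IsPartition P) :
    Module.finrank F (Subalgebra.toSubmodule (MapPart F P)) ≤ P.ncard := by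
  have : Fintype P := Fintype.ofFinite _
  let rep : P → S := fun K => (Setoid.nonempty_of_mem_partition hP K.2).some
  let restrict := (LinearMap.funLeft F F rep).comp (Subalgebra.toSubmodule (MapPart F P)).subtype
  have hinj : Function.Injective restrict := by
    intro f f' h
    ext s
    obtain ⟨K, ⟨hK, hs⟩, -⟩ := hP.2 s
    have hrep : rep ⟨K, hK⟩ ∈ K := (Setoid.nonempty_of_mem_partition hP hK).some_mem
    calc f.1 s = f.1 (rep ⟨K, hK⟩) := f.2 K hK s hs _ hrep
      _ = f'.1 (rep ⟨K, hK⟩) := congrFun h (⟨K, hK⟩ : P)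
      _ = f'.1 s := f'.2 K hK _ hrep s hs
  calc Module.finrank F (Subalgebra.toSubmodule (MapPart F P))
      ≤ Module.finrank F (P → F) := LinearMap.finrank_le_finrank_of_injective hinj
    _ = P.ncard := by rw [Module.finrank_fintype_fun_eq_card, ← Nat.card_eq_fintype_card,
        Nat.card_coe_set_eq]

namespace IsSCT

variable {𝒳 : Set (Set (IrrChar G))} {𝒦 : Set (Set G)}

theorem sigmaChar_mem_mapPart (hsct : IsSCT G 𝒳 𝒦) {X : Set (IrrChar G)} (hX : X ∈ 𝒳) :
    sigmaChar G X ∈ MapPart ℂ 𝒦 :=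
  hsct.2.2.2.2 X hX

open scoped Classical in
theorem span_sigmaChar (hsct : IsSCT G 𝒳 𝒦) :
    Submodule.span ℂ (Set.range fun X : 𝒳 => sigmaChar G X)
      = Subalgebra.toSubmodule (MapPart ℂ 𝒦) := by
  refine Submodule.eq_of_le_of_finrank_le ?_ ?_
  · rw [Submodule.span_le]
    rintro _ ⟨X, rfl⟩
    exact hsct.sigmaChar_mem_mapPart X.2
  · calc Module.finrank ℂ (Subalgebra.toSubmodule (MapPart ℂ 𝒦))
        ≤ 𝒦.ncard := finrank_mapPart_le hsct.2.1
      _ = Module.finrank ℂ (Submodule.span ℂ (Set.range fun X : 𝒳 => sigmaChar G X)) := by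
        rw [finrank_span_eq_card (linearIndependent_sigmaChar hsct.1), ← hsct.2.2.2.1,
          ← Nat.card_eq_fintype_card, Nat.card_coe_set_eq]

open scoped Classical in
theorem exists_natCast_coeffs (hsct : IsSCT G 𝒳 𝒦) {deg : IrrChar G → ℕ}
    (hdeg : ∀ χ : IrrChar G, χ.1 1 = deg χ) {d : Set (IrrChar G) → ℕ}
    (hd : ∀ X ∈ 𝒳, (∀ χ ∈ X, d X ∣ deg χ) ∧ ∀ m : ℕ, (∀ χ ∈ X, m ∣ deg χ) → m ∣ d X)
    {γ : G → ℂ} (hγ : IsChar G γ) (hconst : γ ∈ MapPart ℂ 𝒦) :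
    ∃ a : Set (IrrChar G) → ℕ,
      γ = fun g => ∑ᶠ X ∈ 𝒳, (a X : ℂ) * ((d X : ℂ)⁻¹ * sigmaChar G X g) := by
  have hspan : γ ∈ Submodule.span ℂ (Set.range fun X : 𝒳 => sigmaChar G X) := by
    rw [hsct.span_sigmaChar]
    exact hconst
  obtain ⟨c, hc⟩ := (Submodule.mem_span_range_iff_exists_fun ℂ).1 hspan
  have hcoeff : ∀ X : 𝒳, ∃ a : ℕ, c X = a * (d X : ℂ)⁻¹ := by
    intro X
    have hpairing : ∀ χ ∈ X.1, ∃ m : ℕ, c X * deg χ = m := fun χ hχ => by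
      obtain ⟨m, hm⟩ := hγ.exists_charPairing_eq_natCast χ
      refine ⟨m, ?_⟩
      rw [← hdeg, ← hm, ← hc, charPairing_sum_smul_sigmaChar hsct.1 _ _ (Finset.mem_univ X) hχ]
    obtain ⟨χ₀, hχ₀⟩ := Setoid.nonempty_of_mem_partition hsct.1 X.2
    have hdeg₀ : deg χ₀ ≠ 0 := by exact_mod_cast hdeg χ₀ ▸ χ₀.apply_one_ne_zero_s15
    have hd₀ : (d X : ℂ) ≠ 0 :=
      Nat.cast_ne_zero.2 (ne_zero_of_dvd_ne_zero hdeg₀ ((hd X X.2).1 χ₀ hχ₀))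
    obtain ⟨a, ha⟩ := exists_mul_eq_natCast_of_dvd hχ₀ hdeg₀ hpairing (hd X X.2).2
    exact ⟨a, by rw [← ha, mul_inv_cancel_right₀ hd₀]⟩
  choose a ha using hcoeff
  refine ⟨fun X => if h : X ∈ 𝒳 then a ⟨X, h⟩ else 0, ?_⟩
  ext g
  rw [← hc, ← finsum_set_coe_eq_finsum_mem, finsum_eq_sum_of_fintype, Finset.sum_apply]
  refine Finset.sum_congr rfl fun X _ => ?_
  dsimp only
  rw [Pi.smul_apply, smul_eq_mul, ha, dif_pos X.2, mul_assoc]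

end IsSCT

/-- In a supercharacter theory `(𝒳,𝒦)`, with `d_X = gcd{χ(1) : χ ∈ X}`
and `τ_X = (1/d_X)σ_X`, every character constant on the members of `𝒦` is a nonnegative
integer combination of the `τ_X`; in particular each `τ_X τ_Y` is. -/
theorem stmt15 (G : Type) [Group G] [Fintype G] (𝒳 : Set (Set (IrrChar G)))
    (𝒦 : Set (Set G)) (hsct : IsSCT G 𝒳 𝒦)
    (deg : IrrChar G → ℕ) (hdeg : ∀ χ : IrrChar G, χ.1 1 = (deg χ : ℂ))
    (d : Set (IrrChar G) → ℕ)
    (hd : ∀ X ∈ 𝒳, (∀ χ ∈ X, d X ∣ deg χ) ∧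
        ∀ m : ℕ, (∀ χ ∈ X, m ∣ deg χ) → m ∣ d X)
    (γ : G → ℂ) (hγ : IsChar G γ)
    (hconst : ∀ K ∈ 𝒦, ∀ g ∈ K, ∀ h ∈ K, γ g = γ h) :
    (∃ a : Set (IrrChar G) → ℕ,
        γ = fun g => ∑ᶠ X ∈ 𝒳, (a X : ℂ) * ((d X : ℂ)⁻¹ * sigmaChar G X g)) ∧
    (∀ X ∈ 𝒳, ∀ Y ∈ 𝒳, ∃ a : Set (IrrChar G) → ℕ,
        (fun g => ((d X : ℂ)⁻¹ * sigmaChar G X g) * ((d Y : ℂ)⁻¹ * sigmaChar G Y g))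
          = fun g => ∑ᶠ Z ∈ 𝒳, (a Z : ℂ) * ((d Z : ℂ)⁻¹ * sigmaChar G Z g)) := by
  refine ⟨hsct.exists_natCast_coeffs hdeg hd hγ hconst, fun X hX Y hY => ?_⟩
  refine hsct.exists_natCast_coeffs hdeg hd ?_ ?_
  · exact mul_mem (inv_mul_sigmaChar_mem_charSemiring hdeg (hd X hX).1)
      (inv_mul_sigmaChar_mem_charSemiring hdeg (hd Y hY).1)
  · exact mul_mem (Subalgebra.smul_mem _ (hsct.sigmaChar_mem_mapPart hX) _)
      (Subalgebra.smul_mem _ (hsct.sigmaChar_mem_mapPart hY) _)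

end
end
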